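/- For any W ∈ ℝ^{m×r}, α(W) ≥ σ(W), where α(W) = min_{1≤j≤r} min_{x∈Δ} ‖W(:,j) - W(:,J)x‖₂ (J = {1,...,r}\{j}) and σ(W) denotes the smallest singular value σ_r(W) when m ≥ r, and 0 when m < r. -/

import Mathlib

noncomputable section

open scoped BigOperators

abbrev E (m : ℕ) := EuclideanSpace ℝ (Fin m)

def toE {m : ℕ} (x : Fin m → ℝ) : E m := WithLp.toLp 2 x

/-- The unit simplex `Δ = {y | y ≥ 0, ∑ y ≤ 1}`. -/
def simplex (n : Type*) [Fintype n] : Set (n → ℝ) :=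
  {y | (∀ i, 0 ≤ y i) ∧ ∑ i, y i ≤ 1}

/-- Assumption 2 of the paper: `f` is `μ`-strongly convex with `L`-Lipschitz
gradient `f'`, and `0` is its global minimizer with `f 0 = 0`. -/
structure GoodF {m : ℕ} (f : E m → ℝ) (f' : E m → E m) (μ L : ℝ) : Prop where
  mu_pos : 0 < μ
  grad : ∀ x, HasGradientAt f (f' x) x
  lip : ∀ x y : E m, ‖f' x - f' y‖ ≤ L * ‖x - y‖
  sconv : ∀ x y : E m, ∀ δ : ℝ, 0 ≤ δ → δ ≤ 1 →
    f (δ • x + (1 - δ) • y) ≤ δ * f x + (1 - δ) * f y - μ / 2 * δ * (1 - δ) * ‖x - y‖ ^ 2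
  f_zero : f 0 = 0
  min_zero : ∀ x, f 0 ≤ f x

/-- A minimizer over the unit simplex of `y ↦ f (x - B y)` (chosen via choice). -/
def argminSimplex {m : ℕ} {n : Type*} [Fintype n] (f : E m → ℝ)
    (B : Matrix (Fin m) n ℝ) (x : E m) : n → ℝ :=
  Classical.epsilon fun y => y ∈ simplex n ∧
    ∀ z ∈ simplex n, f (x - toE (B.mulVec y)) ≤ f (x - toE (B.mulVec z))

/-- The residual `R_B^f(x) = x - B y*` where `y* = argmin_{y ∈ Δ} f (x - B y)`. -/
def resid {m : ℕ} {n : Type*} [Fintype n] (f : E m → ℝ)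
    (B : Matrix (Fin m) n ℝ) (x : E m) : E m :=
  x - toE (B.mulVec (argminSimplex f B x))

/-- Column-wise residual matrix `R_B^f(A)`. -/
def residMat {m : ℕ} {n k : Type*} [Fintype n] (f : E m → ℝ)
    (B : Matrix (Fin m) n ℝ) (A : Matrix (Fin m) k ℝ) : Matrix (Fin m) k ℝ :=
  fun i j => resid f B (toE fun i' => A i' j) i

/-- `‖N‖_{1,2}`: the maximum `ℓ₂` column norm. -/
def norm12 {m : ℕ} {n : Type*} [Fintype n] (N : Matrix (Fin m) n ℝ) : ℝ :=
  sSup {c | ∃ j, c = ‖toE fun i => N i j‖}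

/-- `α(W)`: minimum distance between a column of `W` and the convex hull of the
other columns of `W` and the origin. -/
def alpha {m r : ℕ} (W : Matrix (Fin m) (Fin r) ℝ) : ℝ :=
  sInf {c | ∃ (j : Fin r) (x : Fin r → ℝ), x ∈ simplex (Fin r) ∧ x j = 0 ∧
    c = ‖toE (fun i => W i j) - toE (W.mulVec x)‖}

/-- `σ(W)`: smallest singular value (`min_{‖z‖₂ ≥ 1} ‖Wz‖₂`) if `m ≥ r`, and `0` if `m < r`. -/
def smin {m r : ℕ} (W : Matrix (Fin m) (Fin r) ℝ) : ℝ :=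
  if r ≤ m then sInf {c | ∃ z : Fin r → ℝ, 1 ≤ ‖toE z‖ ∧ c = ‖toE (W.mulVec z)‖} else 0

/-- `[B, x]`: append the column `x` to `B`. -/
def appendCol {m s : ℕ} (B : Matrix (Fin m) (Fin s) ℝ) (x : E m) :
    Matrix (Fin m) (Fin (s + 1)) ℝ :=
  fun i => Fin.snoc (fun j => B i j) (x i)

/-- `[A, B]`: horizontal concatenation. -/
def appendMat {m k s : ℕ} (A : Matrix (Fin m) (Fin k) ℝ) (B : Matrix (Fin m) (Fin s) ℝ) :
    Matrix (Fin m) (Fin (k + s)) ℝ :=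
  fun i => Fin.append (fun j => A i j) (fun j => B i j)

/-- `ω(P) = min (min_i ‖p_i‖₂, (1/√2) min_{i ≠ j} ‖p_i - p_j‖₂)`. -/
def omegaM {m : ℕ} {k : Type*} [Fintype k] (P : Matrix (Fin m) k ℝ) : ℝ :=
  sInf ({c | ∃ i, c = ‖toE fun a => P a i‖} ∪
    {c | ∃ i j, i ≠ j ∧ c = (Real.sqrt 2)⁻¹ * ‖(toE fun a => P a i) - toE fun a => P a j‖})

/-- `β(W) = min (ν_β(W), γ_β(W)/√2)` as in the paper. -/
def beta {m r : ℕ} (f : E m → ℝ) (W : Matrix (Fin m) (Fin r) ℝ) : ℝ :=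
  sInf ({c | ∃ j : Fin r,
      c = ‖resid f (W.submatrix id fun p : {i // i ≠ j} => (p : Fin r)) (toE fun a => W a j)‖} ∪
    {c | ∃ (i j : Fin r) (J : Finset (Fin r)), i ≠ j ∧ i ∉ J ∧ j ∉ J ∧
      c = (Real.sqrt 2)⁻¹ *
        ‖resid f (W.submatrix id fun p : J => (p : Fin r)) (toE fun a => W a i) -
         resid f (W.submatrix id fun p : J => (p : Fin r)) (toE fun a => W a j)‖})

theorem Matrix.isHermitian_transpose_mul_self {m n : Type*} [Fintype m]
    (A : Matrix m n ℝ) : (A.transpose * A).IsHermitian := by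
  simpa [Matrix.conjTranspose_eq_transpose_of_trivial] using
    Matrix.isHermitian_conjTranspose_mul_self A

/-- Singular values of `B` in nonincreasing order (`i`-th largest at index `i`). -/
def singVals {m s : ℕ} (B : Matrix (Fin m) (Fin s) ℝ) : Fin s → ℝ := fun i =>
  Real.sqrt (((Matrix.isHermitian_transpose_mul_self B).eigenvalues ∘
    Tuple.sort (Matrix.isHermitian_transpose_mul_self B).eigenvalues) i.rev)

/-- The spectral norm `‖N‖₂` (ℓ₂ operator norm). -/
def spec {m s : ℕ} (N : Matrix (Fin m) (Fin s) ℝ) : ℝ :=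
  ‖LinearMap.toContinuousLinearMap (Matrix.toEuclideanLin N)‖

/-! For `x` in the simplex with `x j = 0`, the vector `z = e_j - x` has `z j = 1`, hence `‖z‖₂ ≥ 1`,
and `W z = W(:,j) - W x`. So every value in the infimum defining `α(W)` also occurs in the infimum
`min_{‖z‖₂ ≥ 1} ‖W z‖₂`, which is `σ(W)` when `m ≥ r`; when `m < r`, `σ(W) = 0 ≤ α(W)`. -/

theorem zero_mem_simplex (n : Type*) [Fintype n] : (0 : n → ℝ) ∈ simplex n :=
  ⟨fun _ => le_rfl, by simp⟩

theorem alpha_nonneg {m r : ℕ} (W : Matrix (Fin m) (Fin r) ℝ) : 0 ≤ alpha W :=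
  Real.sInf_nonneg <| by rintro _ ⟨j, x, -, -, rfl⟩; exact norm_nonneg _

theorem one_le_norm_toE_of_apply_eq_one {r : ℕ} {z : Fin r → ℝ} {j : Fin r} (hz : z j = 1) :
    1 ≤ ‖toE z‖ := by
  simpa [toE, hz] using PiLp.norm_apply_le (toE z) j

theorem toE_col_sub_toE_mulVec {m r : ℕ} (W : Matrix (Fin m) (Fin r) ℝ) (j : Fin r)
    (x : Fin r → ℝ) :
    toE (fun i => W i j) - toE (W.mulVec x) = toE (W.mulVec (Pi.single j 1 - x)) := by
  ext i
  simp [toE, Matrix.mulVec_sub, Matrix.mulVec_single]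

theorem exists_one_le_norm_eq_norm_col_sub_mulVec {m r : ℕ} (W : Matrix (Fin m) (Fin r) ℝ)
    {j : Fin r} {x : Fin r → ℝ} (hxj : x j = 0) :
    ∃ z : Fin r → ℝ, 1 ≤ ‖toE z‖ ∧
      ‖toE (fun i => W i j) - toE (W.mulVec x)‖ = ‖toE (W.mulVec z)‖ :=
  ⟨Pi.single j 1 - x, one_le_norm_toE_of_apply_eq_one (j := j) (by simp [hxj]),
    by rw [toE_col_sub_toE_mulVec]⟩

theorem stmt7 (m r : ℕ) (W : Matrix (Fin m) (Fin r) ℝ) :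
    smin W ≤ alpha W := by
  unfold smin
  split_ifs
  · rcases isEmpty_or_nonempty (Fin r) with hr | hr
    · have hS : {c | ∃ z : Fin r → ℝ, 1 ≤ ‖toE z‖ ∧ c = ‖toE (W.mulVec z)‖} = ∅ := by
        ext c
        simp [Subsingleton.elim (toE _) 0]
      rw [hS, Real.sInf_empty]
      exact alpha_nonneg W
    · obtain ⟨j⟩ := hr
      refine csInf_le_csInf ⟨0, ?_⟩ ⟨_, j, 0, zero_mem_simplex _, rfl, rfl⟩ ?_
      · rintro _ ⟨z, -, rfl⟩
        exact norm_nonneg _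
      · rintro _ ⟨j, x, -, hxj, rfl⟩
        exact exists_one_le_norm_eq_norm_col_sub_mulVec W hxj
  · exact alpha_nonneg W
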